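/- arXiv:1102.2883 — 2 statements merged into one kernel-verified Lean document; each statement's English description precedes it below -/
import Mathlib

section
/- Let κ be a positive integer and let x ∈ [0,κ). Then there exist unique parameters p ∈ (0,1] and q ∈ [0,∞) such that p(1 + q + q² + ⋯ + q^κ) = 1 and p(q + 2q² + ⋯ + κq^κ) = x; equivalently, there is a unique truncated geometric probability distribution on {0,1,…,κ} (one of the form Pr[X=t] = p q^t for t = 0,…,κ) with mean x. -/
open Real Filter Finset

noncomputable section

/-- `ω(n) = n^n / n!`. -/
def omegaFn (n : ℕ) : ℝ := (n : ℝ) ^ n / (n.factorial : ℝ)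

/-- `Ω(V)`: the sum of `ω(v)` over the entries of a vector `V`. -/
def OmegaVec {I : Type*} [Fintype I] (V : I → ℕ) : ℝ := ∑ i, omegaFn (V i)

/-- `Ω(K)`: the sum of `ω(k)` over the entries of a matrix `K`. -/
def OmegaMat {I J : Type*} [Fintype I] [Fintype J] (K : I → J → ℕ) : ℝ :=
  ∑ i, ∑ j, omegaFn (K i j)

/-- `T_K(R,C)`: the number of nonnegative-integer matrices with row sums `R`,
column sums `C`, and entries bounded by `K` (a bound of `⊤` means unbounded). -/
def tableCount {I J : Type*} [Fintype I] [Fintype J]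
    (K : I → J → ℕ∞) (R : I → ℕ) (C : J → ℕ) : ℕ :=
  Set.ncard {A : I → J → ℕ |
    (∀ i, ∑ j, A i j = R i) ∧ (∀ j, ∑ i, A i j = C j) ∧ ∀ i j, (A i j : ℕ∞) ≤ K i j}

/-- The `s`-fold cloning of a margin vector. -/
def cloneVec {m : ℕ} (s : ℕ) (R : Fin m → ℕ) : Fin s × Fin m → ℕ :=
  fun p => s * R p.2

/-- The `s`-fold cloning of a bound matrix. -/
def cloneMat {m n : ℕ} (s : ℕ) (K : Fin m → Fin n → ℕ∞) :
    Fin s × Fin m → Fin s × Fin n → ℕ∞ :=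
  fun p q => K p.2 q.2

/-- The mean of the truncated geometric distribution on `{0,…,κ}` with ratio `q`. -/
def tgMean (κ : ℕ∞) (q : ℝ) : ℝ :=
  if κ = ⊤ then q / (1 - q)
  else (∑ t ∈ Finset.range (κ.toNat + 1), (t : ℝ) * q ^ t) /
    (∑ t ∈ Finset.range (κ.toNat + 1), q ^ t)

/-- The parameter `q(x;κ)` of the truncated geometric distribution `TG(x;κ)` with mean `x`. -/
def tgQ (κ : ℕ∞) (x : ℝ) : ℝ := sInf {q : ℝ | 0 ≤ q ∧ x ≤ tgMean κ q}

/-- The parameter `p(x;κ)` of the truncated geometric distribution `TG(x;κ)` with mean `x`. -/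
def tgP (κ : ℕ∞) (x : ℝ) : ℝ :=
  if κ = ⊤ then 1 - tgQ κ x
  else (∑ t ∈ Finset.range (κ.toNat + 1), tgQ κ x ^ t)⁻¹

/-- The probability mass function of `TG(x;κ)`: `Pr[X=t] = p q^t` for `t ∈ {0,…,κ}`. -/
def tgPMF (κ : ℕ∞) (x : ℝ) (t : ℕ) : ℝ :=
  if (t : ℕ∞) ≤ κ then tgP κ x * tgQ κ x ^ t else 0

/-- `H^max_κ(x)`: the (base-e) entropy of the truncated geometric distribution `TG(x;κ)`. -/
def Hmax (κ : ℕ∞) (x : ℝ) : ℝ := -∑' t : ℕ, tgPMF κ x t * Real.log (tgPMF κ x t)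

/-- The `(κ+1)`-nomial coefficient `(n choose r)_κ`: the coefficient of `x^r` in
`(1+x+⋯+x^κ)^n`; for `κ = ∞` it is `(r+n-1).choose r`. -/
def knomial (κ : ℕ∞) (n r : ℕ) : ℕ :=
  if κ = ⊤ then (r + n - 1).choose r
  else ((∑ t ∈ Finset.range (κ.toNat + 1), (Polynomial.X : Polynomial ℕ) ^ t) ^ n).coeff r

/-- The independence-heuristic estimate `I_κ(R,C)`. -/
def indepEst (κ : ℕ∞) {I J : Type*} [Fintype I] [Fintype J] (R : I → ℕ) (C : J → ℕ) : ℝ :=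
  ((knomial κ (Fintype.card I * Fintype.card J) (∑ i, R i) : ℝ))⁻¹ *
    (∏ i, (knomial κ (Fintype.card J) (R i) : ℝ)) *
    ∏ j, (knomial κ (Fintype.card I) (C j) : ℝ)

/-- The transportation polytope `Π_κ(R,C)` of real matrices with entries in `[0,κ]`,
row sums `R` and column sums `C`. -/
def transportPolytope (κ : ℕ∞) {m n : ℕ} (R : Fin m → ℕ) (C : Fin n → ℕ) :
    Set (Fin m → Fin n → ℝ) :=
  {Z | (∀ i j, 0 ≤ Z i j) ∧ (∀ i j, κ ≠ ⊤ → Z i j ≤ (κ.toNat : ℝ)) ∧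
    (∀ i, ∑ j, Z i j = (R i : ℝ)) ∧ ∀ j, ∑ i, Z i j = (C j : ℝ)}

/-- The generating function `G(x,y) = ∏_{i,j} (1 + x_i y_j + ⋯ + (x_i y_j)^{k_{ij}})`. -/
def genFun {m n : ℕ} (K : Fin m → Fin n → ℕ) (x : Fin m → ℝ) (y : Fin n → ℝ) : ℝ :=
  ∏ i, ∏ j, ∑ t ∈ Finset.range (K i j + 1), (x i * y j) ^ t

/-- The monomial `x^R = ∏_i x_i^{r_i}`. -/
def monom {m : ℕ} (x : Fin m → ℝ) (R : Fin m → ℕ) : ℝ := ∏ i, x i ^ R i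

/-- The concave roof function `f_K(R,C)`: the supremum of `∑_t α_t ln T_K(R^t,C^t)` over
convex combinations of integer margins averaging to `(R,C)` (and `⊥ = -∞` if none exist). -/
def fK {m n : ℕ} (K : Fin m → Fin n → ℕ) (R : Fin m → ℝ) (C : Fin n → ℝ) : EReal :=
  sSup {v : EReal | ∃ (p : ℕ) (α : Fin p → ℝ)
    (Rs : Fin p → Fin m → ℕ) (Cs : Fin p → Fin n → ℕ),
    1 ≤ p ∧ (∀ t, 0 ≤ α t) ∧ ∑ t, α t = 1 ∧
    (∀ i, ∑ t, α t * (Rs t i : ℝ) = R i) ∧ (∀ j, ∑ t, α t * (Cs t j : ℝ) = C j) ∧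
    (∀ t, 0 < tableCount (fun i j => (K i j : ℕ∞)) (Rs t) (Cs t)) ∧
    v = ((∑ t, α t * Real.log (tableCount (fun i j => (K i j : ℕ∞)) (Rs t) (Cs t)) : ℝ) : EReal)}

/-- `e^x` for an extended real `x`, with `e^{-∞} = 0`. -/
def expE (e : EReal) : ℝ := if e = ⊥ then 0 else Real.exp e.toReal

end

/-! The mean `m(q) = (∑ t q^t) / (∑ q^t)` of the law `t ↦ p q^t` on `{0,…,κ}` is continuous on
`[0,∞)`, vanishes at `q = 0` and exceeds any `x < κ` for large `q`, so it takes the value `x`.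
It is strictly increasing: for `0 ≤ a < b`, symmetrizing the double sum turns
`m(b) - m(a)` (up to a positive factor) into `∑_{i,j} (j - i)(a^i b^j - a^j b^i) / 2`, whose terms
are all nonnegative and the term `i = 0, j = κ` is positive. Hence `q` is unique, and `p` is
forced to be `1 / (1 + q + ⋯ + q^κ)`. -/

theorem Finset.two_mul_sum_mul_sum_sub_eq {ι : Type*} (s : Finset ι) (f u v : ι → ℝ) :
    2 * ((∑ i ∈ s, f i * v i) * ∑ i ∈ s, u i - (∑ i ∈ s, f i * u i) * ∑ i ∈ s, v i) =
      ∑ i ∈ s, ∑ j ∈ s, (f j - f i) * (u i * v j - u j * v i) := by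
  set g : ι → ι → ℝ := fun i j => f i * v i * u j - f i * u i * v j
  have hhalf : (∑ i ∈ s, f i * v i) * ∑ i ∈ s, u i - (∑ i ∈ s, f i * u i) * ∑ i ∈ s, v i =
      ∑ i ∈ s, ∑ j ∈ s, g i j := by
    simp only [g, sum_mul_sum, ← sum_sub_distrib]
  calc 2 * ((∑ i ∈ s, f i * v i) * ∑ i ∈ s, u i - (∑ i ∈ s, f i * u i) * ∑ i ∈ s, v i)
      = ∑ i ∈ s, ∑ j ∈ s, g i j + ∑ i ∈ s, ∑ j ∈ s, g j i := by
        rw [hhalf, Finset.sum_comm (f := fun i j => g j i)]; ring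
    _ = _ := by
        simp only [← sum_add_distrib]
        exact sum_congr rfl fun i _ => sum_congr rfl fun j _ => by ring

lemma sub_mul_pow_mul_pow_sub_nonneg {a b : ℝ} (ha : 0 ≤ a) (hab : a ≤ b) (i j : ℕ) :
    0 ≤ ((j : ℝ) - i) * (a ^ i * b ^ j - a ^ j * b ^ i) := by
  wlog hij : i ≤ j generalizing i j
  · linear_combination this j i (by omega)
  obtain ⟨d, rfl⟩ := Nat.exists_eq_add_of_le hij
  have hd : 0 ≤ (d : ℝ) * (a ^ i * b ^ i) * (b ^ d - a ^ d) := by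
    have := pow_le_pow_left₀ ha hab d
    have := ha.trans hab
    positivity
  calc 0 ≤ (d : ℝ) * (a ^ i * b ^ i) * (b ^ d - a ^ d) := hd
    _ = _ := by push_cast; ring

namespace TruncGeom

def mass (κ : ℕ) (q : ℝ) : ℝ := ∑ t ∈ range (κ + 1), q ^ t

def moment (κ : ℕ) (q : ℝ) : ℝ := ∑ t ∈ range (κ + 1), (t : ℝ) * q ^ t

variable {κ : ℕ}

lemma tgMean_natCast (q : ℝ) : tgMean κ q = moment κ q / mass κ q := by
  simp [tgMean, moment, mass]

lemma one_le_mass {q : ℝ} (hq : 0 ≤ q) : 1 ≤ mass κ q := by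
  rw [mass]
  simpa using single_le_sum (f := (q ^ ·)) (fun t _ => pow_nonneg hq t)
    (mem_range.2 κ.succ_pos)

lemma mass_pos {q : ℝ} (hq : 0 ≤ q) : 0 < mass κ q := one_pos.trans_le (one_le_mass hq)

lemma moment_zero : moment κ 0 = 0 :=
  sum_eq_zero fun t _ => by cases t <;> simp

lemma tgMean_natCast_zero : tgMean κ 0 = 0 := by
  rw [tgMean_natCast, moment_zero, zero_div]

lemma continuousOn_tgMean_natCast : ContinuousOn (tgMean κ) (Set.Ici 0) := by
  simp only [funext tgMean_natCast]
  refine ContinuousOn.div (by unfold moment; fun_prop) (by unfold mass; fun_prop) ?_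
  exact fun q hq => (mass_pos hq).ne'

lemma moment_mul_mass_lt_moment_mul_mass (hκ : κ ≠ 0) {a b : ℝ} (ha : 0 ≤ a) (hab : a < b) :
    moment κ a * mass κ b < moment κ b * mass κ a := by
  have hterm := sub_mul_pow_mul_pow_sub_nonneg ha hab.le
  have hlast : 0 < ((κ : ℝ) - (0 : ℕ)) * (a ^ 0 * b ^ κ - a ^ κ * b ^ 0) := by
    have : a ^ κ < b ^ κ := pow_lt_pow_left₀ hab ha hκ
    simp only [Nat.cast_zero, sub_zero, pow_zero, one_mul, mul_one]
    exact mul_pos (by positivity) (sub_pos.2 this)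
  have hpos : 0 < ∑ i ∈ range (κ + 1), ∑ j ∈ range (κ + 1),
      ((j : ℝ) - i) * (a ^ i * b ^ j - a ^ j * b ^ i) :=
    sum_pos' (fun i _ => sum_nonneg fun j _ => hterm i j)
      ⟨0, mem_range.2 κ.succ_pos,
        sum_pos' (fun j _ => hterm 0 j) ⟨κ, self_mem_range_succ κ, hlast⟩⟩
  rw [← two_mul_sum_mul_sum_sub_eq] at hpos
  simp only [moment, mass]
  linarith

lemma strictMonoOn_tgMean_natCast (hκ : κ ≠ 0) : StrictMonoOn (tgMean κ) (Set.Ici 0) := by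
  intro a ha b hb hab
  rw [tgMean_natCast, tgMean_natCast, div_lt_div_iff₀ (mass_pos ha) (mass_pos hb)]
  exact moment_mul_mass_lt_moment_mul_mass hκ ha hab

/-- Multiplying by `q` makes every lower term `(t - x) q^(t+1)` comparable with `q^κ`. -/
lemma pow_mul_le_mul_moment_sub {x q : ℝ} (hx : 0 ≤ x) (hq : 1 ≤ q) :
    q ^ κ * ((κ - x) * q - κ * x) ≤ q * (moment κ q - x * mass κ q) := by
  have hsplit : q * (moment κ q - x * mass κ q) =
      ∑ t ∈ range κ, ((t : ℝ) - x) * q ^ (t + 1) + ((κ : ℝ) - x) * q ^ κ * q := by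
    rw [moment, mass, mul_sum, ← sum_sub_distrib, sum_range_succ, mul_add, mul_sum]
    congr 1
    · exact sum_congr rfl fun t _ => by ring
    · ring
  have hlower : ∀ t ∈ range κ, -x * q ^ κ ≤ ((t : ℝ) - x) * q ^ (t + 1) := fun t ht => by
    have hpow : q ^ (t + 1) ≤ q ^ κ := pow_le_pow_right₀ hq (mem_range.1 ht)
    have : 0 ≤ (t : ℝ) * q ^ (t + 1) := by positivity
    nlinarith
  have := sum_le_sum hlower
  rw [sum_const, card_range, nsmul_eq_mul] at this
  rw [hsplit]
  linear_combination this

lemma exists_lt_tgMean_natCast {x : ℝ} (hx0 : 0 ≤ x) (hxκ : x < κ) :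
    ∃ q, 0 ≤ q ∧ x < tgMean κ q := by
  set q : ℝ := κ * x / (κ - x) + 1
  have hgap : 0 < (κ : ℝ) - x := sub_pos.2 hxκ
  have hq : 1 ≤ q := le_add_of_nonneg_left (by positivity)
  have hlin : (κ - x) * q - κ * x = κ - x := by
    simp only [q]; field_simp; ring
  have hbound := pow_mul_le_mul_moment_sub (κ := κ) hx0 hq
  rw [hlin] at hbound
  have hq0 : 0 < q := one_pos.trans_le hq
  refine ⟨q, hq0.le, ?_⟩
  rw [tgMean_natCast, lt_div_iff₀ (mass_pos hq0.le)]
  nlinarith [pow_pos hq0 κ]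

lemma existsUnique_tgMean_natCast_eq {x : ℝ} (hx0 : 0 ≤ x) (hxκ : x < κ) :
    ∃! q, 0 ≤ q ∧ tgMean κ q = x := by
  have hκ : κ ≠ 0 := by rintro rfl; norm_num at hxκ; linarith
  obtain ⟨M, hM, hxM⟩ := exists_lt_tgMean_natCast hx0 hxκ
  obtain ⟨q, hq, hqx⟩ := intermediate_value_Icc hM
    (continuousOn_tgMean_natCast.mono Set.Icc_subset_Ici_self)
    ⟨by rwa [tgMean_natCast_zero], hxM.le⟩
  exact ⟨q, ⟨hq.1, hqx⟩, fun q' hq' =>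
    (strictMonoOn_tgMean_natCast hκ).injOn hq'.1 hq.1 (hq'.2.trans hqx.symm)⟩

end TruncGeom

open TruncGeom in
theorem truncGeom_exists_unique_general (κ : ℕ) (x : ℝ) (hx0 : 0 ≤ x)
    (hxκ : x < (κ : ℝ)) :
    ∃! pq : ℝ × ℝ, (0 < pq.1 ∧ pq.1 ≤ 1) ∧ 0 ≤ pq.2 ∧
      pq.1 * (∑ t ∈ Finset.range (κ + 1), pq.2 ^ t) = 1 ∧
      pq.1 * (∑ t ∈ Finset.range (κ + 1), (t : ℝ) * pq.2 ^ t) = x := by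
  obtain ⟨q, ⟨hq, hqx⟩, hq_unique⟩ := existsUnique_tgMean_natCast_eq hx0 hxκ
  refine ⟨((mass κ q)⁻¹, q), ⟨⟨inv_pos.2 (mass_pos hq), inv_le_one_of_one_le₀ (one_le_mass hq)⟩,
    hq, inv_mul_cancel₀ (mass_pos hq).ne', ?_⟩, ?_⟩
  · rw [← hqx, tgMean_natCast, inv_mul_eq_div]; rfl
  · rintro ⟨p', q'⟩ ⟨⟨hp', -⟩, hq', hmass, hmoment⟩
    have hmass' : p' * mass κ q' = 1 := hmass
    have hmean : tgMean κ q' = x := by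
      rw [tgMean_natCast, ← mul_div_mul_left _ _ hp'.ne', hmass']
      exact (div_one _).trans hmoment
    obtain rfl := hq_unique q' ⟨hq', hmean⟩
    exact Prod.ext (eq_inv_of_mul_eq_one_left hmass') rfl

/-- **Lemma.** For `x ∈ [0,κ)` there is a unique truncated geometric distribution on
`{0,…,κ}` with mean `x`: unique parameters `p ∈ (0,1]`, `q ∈ [0,∞)` with
`p(1+q+⋯+q^κ) = 1` and `p(q+2q²+⋯+κq^κ) = x`. -/
theorem truncGeom_exists_unique (κ : ℕ) (hκ : 0 < κ) (x : ℝ) (hx0 : 0 ≤ x)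
    (hxκ : x < (κ : ℝ)) :
    ∃! pq : ℝ × ℝ, (0 < pq.1 ∧ pq.1 ≤ 1) ∧ 0 ≤ pq.2 ∧
      pq.1 * (∑ t ∈ Finset.range (κ + 1), pq.2 ^ t) = 1 ∧
      pq.1 * (∑ t ∈ Finset.range (κ + 1), (t : ℝ) * pq.2 ^ t) = x :=
  truncGeom_exists_unique_general κ x hx0 hxκ
end

section
/- Let κ be a positive integer and let R ∈ ℤ_{≥0}^m, C ∈ ℤ_{≥0}^n with |R| = |C|. Suppose Π_κ(R,C) contains a matrix all of whose entries lie strictly between 0 and κ. Then the function Z ↦ Σ_{i=1}^m Σ_{j=1}^n H^max_κ(z_{ij}) attains its maximum over Π_κ(R,C) at a unique matrix Z, and this maximizer satisfies 0 < z_{ij} < κ for all i,j. -/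
open Real Filter Finset

/-!
For `0 < x < κ`, `TG(x;κ)` is the law `t ↦ q^t / S(q)` with `S(q) = ∑_{t ≤ κ} q^t` and ratio
`q = tgQ κ x` of mean `x`, so Gibbs' inequality gives
`H^max_κ(x) = min_{q > 0} (log S(q) - x log q)`. As an infimum of affine functions of `x` it is
concave, and strictly so because distinct means come from distinct ratios. It vanishes at `0` and
`κ`, is symmetric under `x ↦ κ - x`, and `H^max_κ(x) ≥ -x log((κ + 1) x)` near `0`, so its slope is
infinite at both ends. Hence `Z ↦ ∑ H^max_κ(z_ij)` is continuous and strictly concave on the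
compact convex polytope and has a unique maximizer; and moving a maximizer with an entry in
`{0, κ}` slightly towards the interior point gains more at that entry than it loses elsewhere.
-/

open Set Topology

section TruncatedGeometric

variable {κ : ℕ} {q x : ℝ}

noncomputable def tgPartition (κ : ℕ) (q : ℝ) : ℝ := ∑ t ∈ range (κ + 1), q ^ t

noncomputable def tgMoment (κ : ℕ) (q : ℝ) : ℝ := ∑ t ∈ range (κ + 1), (t : ℝ) * q ^ t

lemma tgPartition_eq_one_add (κ : ℕ) (q : ℝ) :
    tgPartition κ q = ∑ t ∈ range κ, q ^ (t + 1) + 1 := by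
  simp [tgPartition, sum_range_succ']

lemma one_le_tgPartition (hq : 0 ≤ q) : 1 ≤ tgPartition κ q := by
  rw [tgPartition_eq_one_add]
  linarith [sum_nonneg fun t (_ : t ∈ range κ) => pow_nonneg hq (t + 1)]

lemma one_lt_tgPartition (hκ : 0 < κ) (hq : 0 < q) : 1 < tgPartition κ q := by
  rw [tgPartition_eq_one_add]
  linarith [sum_pos (fun t _ => pow_pos hq (t + 1)) (nonempty_range_iff.2 hκ.ne')]

lemma tgPartition_pos (hq : 0 ≤ q) : 0 < tgPartition κ q :=
  one_pos.trans_le (one_le_tgPartition hq)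

lemma tgPartition_zero : tgPartition κ 0 = 1 := by
  simp [tgPartition_eq_one_add]

lemma continuous_tgPartition : Continuous (tgPartition κ) :=
  continuous_finsetSum _ fun t _ => continuous_pow t

lemma continuous_tgMoment : Continuous (tgMoment κ) :=
  continuous_finsetSum _ fun t _ => continuous_const.mul (continuous_pow t)

lemma tgMean_natCast (κ : ℕ) (q : ℝ) : tgMean κ q = tgMoment κ q / tgPartition κ q := by
  simp [tgMean, tgMoment, tgPartition]

lemma continuousOn_tgMean : ContinuousOn (tgMean κ) (Ici 0) := by
  simp_rw [funext (tgMean_natCast κ)]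
  exact continuous_tgMoment.continuousOn.div continuous_tgPartition.continuousOn
    fun q hq => (tgPartition_pos hq).ne'

lemma tgMean_zero : tgMean κ 0 = 0 := by
  simp [tgMean_natCast, tgMoment, sum_range_succ']

lemma tgMean_lt (hκ : 0 < κ) (hq : 0 ≤ q) : tgMean κ q < κ := by
  rw [tgMean_natCast, div_lt_iff₀ (tgPartition_pos hq), tgMoment, tgPartition, mul_sum]
  refine sum_lt_sum (fun t ht => ?_) ⟨0, by simp, by simpa using hκ⟩
  gcongr
  exact_mod_cast Nat.lt_succ_iff.1 (mem_range.1 ht)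

lemma div_le_tgMean (hκ : 0 < κ) (hq₀ : 0 ≤ q) (hq₁ : q ≤ 1) : q / (κ + 1) ≤ tgMean κ q := by
  have hmoment : q ≤ tgMoment κ q := by
    simpa [tgMoment] using single_le_sum (fun t _ => mul_nonneg t.cast_nonneg (pow_nonneg hq₀ t))
      (mem_range.2 (Nat.succ_lt_succ hκ) : 1 ∈ range (κ + 1))
  have hpartition : tgPartition κ q ≤ κ + 1 := by
    simpa [tgPartition] using sum_le_sum fun t (_ : t ∈ range (κ + 1)) => pow_le_one₀ hq₀ hq₁
  rw [tgMean_natCast]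
  exact div_le_div₀ (hq₀.trans hmoment) hmoment (tgPartition_pos hq₀) hpartition

lemma pow_mul_sum_range_inv_pow (f : ℕ → ℝ) (hq : q ≠ 0) :
    q ^ κ * ∑ t ∈ range (κ + 1), f t * q⁻¹ ^ t = ∑ t ∈ range (κ + 1), f (κ - t) * q ^ t := by
  conv_rhs => rw [← sum_range_reflect]
  rw [mul_sum]
  refine sum_congr rfl fun t ht => ?_
  have ht : t ≤ κ := Nat.lt_succ_iff.1 (mem_range.1 ht)
  rw [Nat.add_sub_cancel, Nat.sub_sub_self ht, pow_sub₀ q hq ht, inv_pow]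
  ring

lemma tgPartition_inv (hq : q ≠ 0) : tgPartition κ q⁻¹ = tgPartition κ q / q ^ κ := by
  rw [eq_div_iff (pow_ne_zero κ hq), mul_comm]
  simpa [tgPartition] using pow_mul_sum_range_inv_pow (κ := κ) (fun _ => 1) hq

lemma tgMean_inv (hq : 0 < q) : tgMean κ q⁻¹ = κ - tgMean κ q := by
  have hmoment : q ^ κ * tgMoment κ q⁻¹ = κ * tgPartition κ q - tgMoment κ q := by
    rw [tgMoment, pow_mul_sum_range_inv_pow _ hq.ne', tgPartition, tgMoment, mul_sum,
      ← sum_sub_distrib]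
    refine sum_congr rfl fun t ht => ?_
    rw [Nat.cast_sub (Nat.lt_succ_iff.1 (mem_range.1 ht))]
    ring
  rw [tgMean_natCast, tgMean_natCast, tgPartition_inv hq.ne', div_div_eq_mul_div, mul_comm,
    hmoment, sub_div, mul_div_cancel_right₀ _ (tgPartition_pos hq.le).ne']

lemma tgQ_le (hq : 0 ≤ q) (hx : x ≤ tgMean κ q) : tgQ κ x ≤ q :=
  csInf_le ⟨0, fun _ hq => hq.1⟩ ⟨hq, hx⟩

lemma tgQ_mem (hx : x ∈ Ioo 0 (κ : ℝ)) : 0 ≤ tgQ κ x ∧ x ≤ tgMean κ (tgQ κ x) := by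
  have hclosed : IsClosed {q : ℝ | 0 ≤ q ∧ x ≤ tgMean κ q} :=
    continuousOn_tgMean.preimage_isClosed_of_isClosed isClosed_Ici isClosed_Ici
  obtain ⟨q, hmean, hq⟩ : ∃ q, tgMean κ q < κ - x ∧ 0 < q := by
    have hcont : ContinuousWithinAt (tgMean κ) (Ioi 0) 0 :=
      (continuousOn_tgMean.continuousWithinAt self_mem_Ici).mono Ioi_subset_Ici_self
    refine ((hcont.eventually_lt continuousWithinAt_const ?_).and self_mem_nhdsWithin).exists
    rw [tgMean_zero]
    linarith [hx.2]
  have hne : {q : ℝ | 0 ≤ q ∧ x ≤ tgMean κ q}.Nonempty :=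
    ⟨q⁻¹, inv_nonneg.2 hq.le, by rw [tgMean_inv hq]; linarith⟩
  exact hclosed.csInf_mem hne ⟨0, fun _ hq => hq.1⟩

lemma tgQ_pos (hx : x ∈ Ioo 0 (κ : ℝ)) : 0 < tgQ κ x := by
  obtain ⟨hq, hmean⟩ := tgQ_mem hx
  refine hq.lt_of_ne fun h => ?_
  rw [← h, tgMean_zero] at hmean
  exact hmean.not_gt hx.1

lemma tgMean_tgQ (hx : x ∈ Ioo 0 (κ : ℝ)) : tgMean κ (tgQ κ x) = x := by
  obtain ⟨hq, hmean⟩ := tgQ_mem hx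
  obtain ⟨c, hc, hcx⟩ := intermediate_value_Icc hq
    (continuousOn_tgMean.mono Icc_subset_Ici_self) ⟨tgMean_zero.trans_le hx.1.le, hmean⟩
  rwa [le_antisymm hc.2 (tgQ_le hc.1 hcx.ge)] at hcx

lemma tgQ_zero : tgQ κ 0 = 0 :=
  (tgQ_le le_rfl tgMean_zero.ge).antisymm (le_csInf ⟨0, le_rfl, tgMean_zero.ge⟩ fun _ hq => hq.1)

-- `sInf ∅ = 0`: the `TG(κ;κ)` of the definitions is the point mass at `0`, not at `κ`; its
-- entropy is still `0`.
lemma tgQ_natCast_self (hκ : 0 < κ) : tgQ κ κ = 0 := by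
  have hempty : {q : ℝ | 0 ≤ q ∧ (κ : ℝ) ≤ tgMean κ q} = ∅ :=
    eq_empty_of_forall_notMem fun q hq => (tgMean_lt hκ hq.1).not_ge hq.2
  rw [tgQ, hempty, Real.sInf_empty]

noncomputable def tgLaw (κ : ℕ) (q : ℝ) (t : ℕ) : ℝ := (tgPartition κ q)⁻¹ * q ^ t

lemma tgLaw_pos (hq : 0 < q) (t : ℕ) : 0 < tgLaw κ q t :=
  mul_pos (inv_pos.2 (tgPartition_pos hq.le)) (pow_pos hq t)

lemma sum_tgLaw (hq : 0 ≤ q) : ∑ t ∈ range (κ + 1), tgLaw κ q t = 1 := by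
  simp only [tgLaw, ← mul_sum]
  exact inv_mul_cancel₀ (tgPartition_pos hq).ne'

lemma sum_mul_tgLaw : ∑ t ∈ range (κ + 1), (t : ℝ) * tgLaw κ q t = tgMean κ q := by
  simp only [tgLaw, tgMean_natCast, tgMoment, mul_left_comm _ (tgPartition κ q)⁻¹, ← mul_sum,
    div_eq_inv_mul]

lemma Hmax_natCast (κ : ℕ) (x : ℝ) :
    Hmax κ x = -∑ t ∈ range (κ + 1), tgLaw κ (tgQ κ x) t * log (tgLaw κ (tgQ κ x) t) := by
  have hpmf (t : ℕ) : tgPMF κ x t = if t ≤ κ then tgLaw κ (tgQ κ x) t else 0 := by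
    simp [tgPMF, tgP, tgLaw, tgPartition]
  rw [Hmax, tsum_eq_sum (s := range (κ + 1)) fun t ht => by
    simp [hpmf, Nat.lt_succ_iff.not.1 (mem_range.not.1 ht)]]
  refine congrArg _ (sum_congr rfl fun t ht => ?_)
  rw [hpmf, if_pos (Nat.lt_succ_iff.1 (mem_range.1 ht))]

lemma Hmax_of_tgQ_eq_zero (h : tgQ κ x = 0) : Hmax κ x = 0 := by
  simp [Hmax_natCast, h, tgLaw, tgPartition_zero]

lemma Hmax_zero : Hmax κ 0 = 0 := Hmax_of_tgQ_eq_zero tgQ_zero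

lemma Hmax_natCast_self (hκ : 0 < κ) : Hmax κ κ = 0 := Hmax_of_tgQ_eq_zero (tgQ_natCast_self hκ)

lemma sum_mul_log_lt_sum_mul_log {ι : Type*} {s : Finset ι} {p r : ι → ℝ}
    (hp : ∀ i ∈ s, 0 < p i) (hr : ∀ i ∈ s, 0 < r i) (hsum : ∑ i ∈ s, p i = ∑ i ∈ s, r i)
    (hne : ∃ i ∈ s, p i ≠ r i) :
    ∑ i ∈ s, p i * log (r i) < ∑ i ∈ s, p i * log (p i) := by
  have hterm : ∀ i ∈ s, p i * log (r i) - p i * log (p i) = p i * log (r i / p i) :=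
    fun i hi => by rw [log_div (hr i hi).ne' (hp i hi).ne', mul_sub]
  have hlin : ∀ i ∈ s, p i * (r i / p i - 1) = r i - p i :=
    fun i hi => by field_simp [(hp i hi).ne']
  have hlt : ∑ i ∈ s, (p i * log (r i) - p i * log (p i)) < ∑ i ∈ s, (r i - p i) := by
    refine sum_lt_sum (fun i hi => ?_) ?_
    · rw [hterm i hi, ← hlin i hi]
      exact mul_le_mul_of_nonneg_left (log_le_sub_one_of_pos (div_pos (hr i hi) (hp i hi)))
        (hp i hi).le
    · obtain ⟨i, hi, hne⟩ := hne
      refine ⟨i, hi, ?_⟩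
      rw [hterm i hi, ← hlin i hi]
      refine mul_lt_mul_of_pos_left (log_lt_sub_one_of_pos (div_pos (hr i hi) (hp i hi)) ?_)
        (hp i hi)
      rwa [ne_eq, div_eq_one_iff_eq (hp i hi).ne', eq_comm]
  rw [sum_sub_distrib, sum_sub_distrib, hsum, sub_self] at hlt
  linarith

/-- `tgCrossEntropy κ q x = -∑ w_t log (q^t / S(q))` for every law `w` on `{0,…,κ}` with mean
`x`, where `S(q) = tgPartition κ q`. -/
noncomputable def tgCrossEntropy (κ : ℕ) (q x : ℝ) : ℝ := log (tgPartition κ q) - x * log q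

lemma neg_sum_mul_log_tgLaw (hq : 0 < q) {w : ℕ → ℝ} (h₁ : ∑ t ∈ range (κ + 1), w t = 1)
    (hx : ∑ t ∈ range (κ + 1), (t : ℝ) * w t = x) :
    -∑ t ∈ range (κ + 1), w t * log (tgLaw κ q t) = tgCrossEntropy κ q x := by
  have hlog (t : ℕ) : log (tgLaw κ q t) = t * log q - log (tgPartition κ q) := by
    rw [tgLaw, log_mul (inv_ne_zero (tgPartition_pos hq.le).ne') (pow_ne_zero _ hq.ne'),
      log_inv, log_pow]
    ring
  have hsum : ∑ t ∈ range (κ + 1), w t * log (tgLaw κ q t) =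
      x * log q - log (tgPartition κ q) := by
    simp only [hlog, mul_sub, sum_sub_distrib, ← sum_mul, h₁, one_mul, ← hx]
    exact congrArg (· - _) ((sum_mul ..).trans (sum_congr rfl fun t _ => by ring)).symm
  rw [hsum, tgCrossEntropy]
  ring

lemma Hmax_eq_tgCrossEntropy (hx : x ∈ Ioo 0 (κ : ℝ)) :
    Hmax κ x = tgCrossEntropy κ (tgQ κ x) x := by
  rw [Hmax_natCast, neg_sum_mul_log_tgLaw (tgQ_pos hx) (sum_tgLaw (tgQ_pos hx).le)
    (by rw [sum_mul_tgLaw, tgMean_tgQ hx])]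

lemma Hmax_lt_tgCrossEntropy (hx : x ∈ Ioo 0 (κ : ℝ)) (hq : 0 < q) (hne : q ≠ tgQ κ x) :
    Hmax κ x < tgCrossEntropy κ q x := by
  have hq' := tgQ_pos hx
  have hratio {p : ℝ} (hp : 0 < p) : tgLaw κ p 1 / tgLaw κ p 0 = p := by
    rw [tgLaw, tgLaw, pow_one, pow_zero, mul_one,
      mul_div_cancel_left₀ _ (inv_ne_zero (tgPartition_pos hp.le).ne')]
  rw [Hmax_natCast, ← neg_sum_mul_log_tgLaw hq (sum_tgLaw hq'.le)
    (by rw [sum_mul_tgLaw, tgMean_tgQ hx]), neg_lt_neg_iff]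
  refine sum_mul_log_lt_sum_mul_log (fun t _ => tgLaw_pos hq' t) (fun t _ => tgLaw_pos hq t)
    (by rw [sum_tgLaw hq'.le, sum_tgLaw hq.le]) ?_
  by_contra! h
  refine hne ?_
  have hκ : 0 < κ := by exact_mod_cast hx.1.trans hx.2
  calc q = tgLaw κ q 1 / tgLaw κ q 0 := (hratio hq).symm
    _ = tgLaw κ (tgQ κ x) 1 / tgLaw κ (tgQ κ x) 0 := by
      rw [h 1 (by simpa using hκ), h 0 (by simp)]
    _ = tgQ κ x := hratio hq'

lemma Hmax_le_tgCrossEntropy (hx : x ∈ Ioo 0 (κ : ℝ)) (hq : 0 < q) :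
    Hmax κ x ≤ tgCrossEntropy κ q x := by
  rcases eq_or_ne q (tgQ κ x) with rfl | hne
  · exact (Hmax_eq_tgCrossEntropy hx).le
  · exact (Hmax_lt_tgCrossEntropy hx hq hne).le

lemma tgCrossEntropy_inv (hq : 0 < q) :
    tgCrossEntropy κ q⁻¹ (κ - x) = tgCrossEntropy κ q x := by
  rw [tgCrossEntropy, tgCrossEntropy, tgPartition_inv hq.ne',
    log_div (tgPartition_pos hq.le).ne' (pow_ne_zero _ hq.ne'), log_pow, log_inv]
  ring

lemma tgCrossEntropy_zero_pos (hκ : 0 < κ) (hq : 0 < q) : 0 < tgCrossEntropy κ q 0 := by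
  simpa [tgCrossEntropy] using log_pos (one_lt_tgPartition hκ hq)

lemma tgCrossEntropy_natCast_self_pos (hκ : 0 < κ) (hq : 0 < q) :
    0 < tgCrossEntropy κ q κ := by
  have h := tgCrossEntropy_inv (κ := κ) (x := κ) hq
  rw [sub_self] at h
  exact h ▸ tgCrossEntropy_zero_pos hκ (inv_pos.2 hq)

lemma Hmax_lt_tgCrossEntropy_tgQ {a m : ℝ} (hκ : 0 < κ) (ha : a ∈ Icc 0 (κ : ℝ))
    (hm : m ∈ Ioo 0 (κ : ℝ)) (hne : a ≠ m) : Hmax κ a < tgCrossEntropy κ (tgQ κ m) a := by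
  have hq := tgQ_pos hm
  rcases ha.1.eq_or_lt with rfl | ha₀
  · exact Hmax_zero.trans_lt (tgCrossEntropy_zero_pos hκ hq)
  rcases ha.2.eq_or_lt with rfl | haκ
  · exact (Hmax_natCast_self hκ).trans_lt (tgCrossEntropy_natCast_self_pos hκ hq)
  refine Hmax_lt_tgCrossEntropy ⟨ha₀, haκ⟩ hq fun h => hne ?_
  rw [← tgMean_tgQ ⟨ha₀, haκ⟩, ← h, tgMean_tgQ hm]

lemma strictConcaveOn_Hmax (hκ : 0 < κ) : StrictConcaveOn ℝ (Icc 0 (κ : ℝ)) (Hmax κ) := by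
  refine ⟨convex_Icc _ _, fun a ha b hb hab s r hs hr hsr => ?_⟩
  simp only [smul_eq_mul]
  set m := s * a + r * b
  have hm : m ∈ Ioo 0 (κ : ℝ) := by
    rcases hab.lt_or_gt with h | h
    · constructor <;> nlinarith [ha.1, hb.2, mul_pos hr (sub_pos.2 h), mul_pos hs (sub_pos.2 h)]
    · constructor <;> nlinarith [hb.1, ha.2, mul_pos hr (sub_pos.2 h), mul_pos hs (sub_pos.2 h)]
  have hma : a ≠ m := fun h => hab (mul_left_cancel₀ hr.ne' (by linear_combination a * hsr + h))
  have hmb : b ≠ m := fun h => hab (mul_left_cancel₀ hs.ne' (by linear_combination -h - b * hsr))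
  calc s * Hmax κ a + r * Hmax κ b
      < s * tgCrossEntropy κ (tgQ κ m) a + r * tgCrossEntropy κ (tgQ κ m) b := by
        gcongr
        exacts [Hmax_lt_tgCrossEntropy_tgQ hκ ha hm hma, Hmax_lt_tgCrossEntropy_tgQ hκ hb hm hmb]
    _ = tgCrossEntropy κ (tgQ κ m) m := by
        simp only [tgCrossEntropy, m]
        linear_combination log (tgPartition κ (tgQ κ m)) * hsr
    _ = Hmax κ m := (Hmax_eq_tgCrossEntropy hm).symm

lemma Hmax_nonneg (hκ : 0 < κ) (hx : x ∈ Icc 0 (κ : ℝ)) : 0 ≤ Hmax κ x := by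
  have hκ' : (0 : ℝ) ≤ κ := Nat.cast_nonneg κ
  simpa [Hmax_zero, Hmax_natCast_self hκ] using (strictConcaveOn_Hmax hκ).concaveOn.ge_on_segment
    (left_mem_Icc.2 hκ') (right_mem_Icc.2 hκ') (by rwa [segment_eq_Icc hκ'])

lemma Hmax_natCast_sub (hκ : 0 < κ) (hx : x ∈ Icc 0 (κ : ℝ)) : Hmax κ (κ - x) = Hmax κ x := by
  have key : ∀ y ∈ Ioo 0 (κ : ℝ), Hmax κ (κ - y) ≤ Hmax κ y := fun y hy => by
    have hq := tgQ_pos hy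
    calc Hmax κ (κ - y) ≤ tgCrossEntropy κ (tgQ κ y)⁻¹ (κ - y) :=
          Hmax_le_tgCrossEntropy ⟨by linarith [hy.2], by linarith [hy.1]⟩ (inv_pos.2 hq)
      _ = Hmax κ y := by rw [tgCrossEntropy_inv hq, Hmax_eq_tgCrossEntropy hy]
  rcases hx.1.eq_or_lt with rfl | hx₀
  · rw [sub_zero, Hmax_zero, Hmax_natCast_self hκ]
  rcases hx.2.eq_or_lt with rfl | hxκ
  · rw [sub_self, Hmax_zero, Hmax_natCast_self hκ]
  refine (key x ⟨hx₀, hxκ⟩).antisymm ?_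
  simpa using key (κ - x) ⟨by linarith, by linarith⟩

lemma continuousWithinAt_Hmax_zero (hκ : 0 < κ) : ContinuousWithinAt (Hmax κ) (Ici 0) 0 := by
  have hκ' : (0 : ℝ) < κ := Nat.cast_pos.2 hκ
  have hupper : ∀ᶠ x in 𝓝[≥] 0, Hmax κ x ≤ log (tgPartition κ x) - x * log x := by
    filter_upwards [Ico_mem_nhdsGE hκ'] with x hx
    rcases hx.1.eq_or_lt with rfl | hx₀
    · simp [Hmax_zero, tgPartition_zero]
    · exact Hmax_le_tgCrossEntropy ⟨hx₀, hx.2⟩ hx₀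
  have hlower : ∀ᶠ x in 𝓝[≥] 0, 0 ≤ Hmax κ x := by
    filter_upwards [Ico_mem_nhdsGE hκ'] with x hx
    exact Hmax_nonneg hκ (Ico_subset_Icc_self hx)
  have hlim : Tendsto (fun x => log (tgPartition κ x) - x * log x) (𝓝[≥] 0) (𝓝 0) := by
    have hcont : ContinuousAt (fun x => log (tgPartition κ x) - x * log x) 0 :=
      (continuous_tgPartition.continuousAt.log (by simp [tgPartition_zero])).sub
        continuous_mul_log.continuousAt
    simpa [tgPartition_zero] using hcont.tendsto.mono_left nhdsWithin_le_nhds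
  rw [ContinuousWithinAt, Hmax_zero]
  exact tendsto_of_tendsto_of_tendsto_of_le_of_le' tendsto_const_nhds hlim hlower hupper

lemma continuousOn_Hmax (hκ : 0 < κ) : ContinuousOn (Hmax κ) (Icc 0 (κ : ℝ)) := by
  have hκ' : (0 : ℝ) < κ := Nat.cast_pos.2 hκ
  refine (strictConcaveOn_Hmax hκ).concaveOn.continuousOn_Icc hκ'
    (continuousWithinAt_Hmax_zero hκ) ?_
  have hreflect : ContinuousWithinAt (fun x => Hmax κ (κ - x)) (Iic (κ : ℝ)) κ :=
    (continuousWithinAt_Hmax_zero hκ).comp_of_eq (continuous_sub_left _).continuousWithinAt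
      (fun x hx => Set.mem_Ici.2 (sub_nonneg.2 hx)) (sub_self _)
  refine hreflect.congr_of_eventuallyEq ?_ (Hmax_natCast_sub hκ (right_mem_Icc.2 hκ'.le)).symm
  filter_upwards [Ioc_mem_nhdsLE hκ'] with x hx
  exact (Hmax_natCast_sub hκ (Ioc_subset_Icc_self hx)).symm

lemma neg_mul_log_le_Hmax (hκ : 0 < κ) (hx₀ : 0 < x) (hx₁ : x * (κ + 1) ≤ 1) :
    -(x * log (x * (κ + 1))) ≤ Hmax κ x := by
  have hx : x ∈ Ioo 0 (κ : ℝ) := ⟨hx₀, by nlinarith [(Nat.one_le_cast (α := ℝ)).2 hκ]⟩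
  have hq := tgQ_pos hx
  have hmean := div_le_tgMean hκ (by positivity) hx₁
  rw [mul_div_cancel_right₀ x (by positivity)] at hmean
  have hle : tgQ κ x ≤ x * (κ + 1) := tgQ_le (by positivity) hmean
  rw [Hmax_eq_tgCrossEntropy hx, tgCrossEntropy]
  linarith [log_nonneg (one_le_tgPartition (κ := κ) hq.le),
    mul_le_mul_of_nonneg_left (log_le_log hq hle) hx₀.le]

lemma tendsto_mul_const_nhdsGT_zero {d : ℝ} (hd : 0 < d) :
    Tendsto (fun t => t * d) (𝓝[>] 0) (𝓝[>] 0) :=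
  tendsto_nhdsWithin_iff.2
    ⟨by simpa using ((continuous_mul_const d).tendsto 0).mono_left nhdsWithin_le_nhds,
      eventually_nhdsWithin_of_forall fun _ ht => mul_pos ht hd⟩

lemma tendsto_slope_Hmax_zero (hκ : 0 < κ) : Tendsto (slope (Hmax κ) 0) (𝓝[>] 0) atTop := by
  have hlog : Tendsto (fun x => -log (x * (κ + 1))) (𝓝[>] 0) atTop :=
    tendsto_neg_atBot_atTop.comp
      (tendsto_log_nhdsGT_zero.comp (tendsto_mul_const_nhdsGT_zero (by positivity)))
  refine tendsto_atTop_mono' _ ?_ hlog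
  filter_upwards [Ioo_mem_nhdsGT (show (0 : ℝ) < 1 / (κ + 1) by positivity)] with x hx
  have hx₁ : x * (κ + 1) ≤ 1 := ((lt_div_iff₀ (by positivity)).1 hx.2).le
  rw [slope_def_field, Hmax_zero, sub_zero, sub_zero, le_div_iff₀ hx.1]
  linarith [neg_mul_log_le_Hmax hκ hx.1 hx₁]

lemma tendsto_slope_Hmax_natCast_sub (hκ : 0 < κ) :
    Tendsto (slope (fun s => Hmax κ (κ - s)) 0) (𝓝[>] 0) atTop := by
  refine (tendsto_slope_Hmax_zero hκ).congr' ?_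
  filter_upwards [Ioo_mem_nhdsGT (Nat.cast_pos.2 hκ : (0 : ℝ) < κ)] with s hs
  simp only [slope_def_field, sub_zero, Hmax_natCast_sub hκ (Ioo_subset_Icc_self hs),
    Hmax_natCast_self hκ, Hmax_zero]

end TruncatedGeometric

lemma StrictConcaveOn.lt_of_isMaxOn {E : Type*} [AddCommGroup E] [Module ℝ E] {S : Set E}
    {f : E → ℝ} {x y : E} (hf : StrictConcaveOn ℝ S f) (hx : x ∈ S) (hmax : IsMaxOn f S x)
    (hy : y ∈ S) (hne : y ≠ x) : f y < f x :=
  (isMaxOn_iff.1 hmax y hy).lt_of_ne fun heq =>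
    hne (hf.eq_of_isMaxOn (fun z hz => heq ▸ isMaxOn_iff.1 hmax z hz) hmax hy hx)

section EntrySum

variable {I J : Type*} [Fintype I] [Fintype J] {s : Set ℝ} {h : ℝ → ℝ} {P : Set (I → J → ℝ)}

def entrySum (h : ℝ → ℝ) (Y : I → J → ℝ) : ℝ := ∑ i, ∑ j, h (Y i j)

lemma ConcaveOn.sub_le_entrySum_sub (hh : ConcaveOn ℝ s h) {Y Z : I → J → ℝ}
    (hY : ∀ i j, Y i j ∈ s) (hZ : ∀ i j, Z i j ∈ s) {a b : ℝ} (ha : 0 ≤ a) (hb : 0 ≤ b)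
    (hab : a + b = 1) (i : I) (j : J) :
    h (a * Y i j + b * Z i j) - (a * h (Y i j) + b * h (Z i j)) ≤
      entrySum h (a • Y + b • Z) - (a * entrySum h Y + b * entrySum h Z) := by
  set gap := fun i j => h (a * Y i j + b * Z i j) - (a * h (Y i j) + b * h (Z i j))
  have hgap : ∀ i j, 0 ≤ gap i j :=
    fun i j => sub_nonneg.2 (by simpa using hh.2 (hY i j) (hZ i j) ha hb hab)
  have hsum : entrySum h (a • Y + b • Z) - (a * entrySum h Y + b * entrySum h Z) =
      ∑ i, ∑ j, gap i j := by
    simp [gap, entrySum, mul_sum, sum_add_distrib, sum_sub_distrib]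
  rw [hsum]
  calc gap i j ≤ ∑ j', gap i j' := single_le_sum (fun j' _ => hgap i j') (mem_univ j)
    _ ≤ ∑ i', ∑ j', gap i' j' :=
      single_le_sum (fun i' _ => sum_nonneg fun j' _ => hgap i' j') (mem_univ i)

lemma StrictConcaveOn.entrySum (hh : StrictConcaveOn ℝ s h) (hP : Convex ℝ P)
    (hPs : ∀ Y ∈ P, ∀ i j, Y i j ∈ s) : StrictConcaveOn ℝ P (entrySum h) := by
  refine ⟨hP, fun Y hY Z hZ hne a b ha hb hab => ?_⟩
  obtain ⟨i, j, hij⟩ : ∃ i j, Y i j ≠ Z i j := by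
    by_contra! h
    exact hne (funext fun i => funext (h i))
  have hstrict := hh.2 (hPs Y hY i j) (hPs Z hZ i j) hij ha hb hab
  have hgap := hh.concaveOn.sub_le_entrySum_sub (hPs Y hY) (hPs Z hZ) ha.le hb.le hab i j
  simp only [smul_eq_mul] at hstrict ⊢
  linarith

lemma ContinuousOn.entrySum (hh : ContinuousOn h s) (hPs : ∀ Y ∈ P, ∀ i j, Y i j ∈ s) :
    ContinuousOn (entrySum h) P :=
  continuousOn_finsetSum _ fun i _ => continuousOn_finsetSum _ fun j _ =>
    hh.comp ((continuous_apply j).comp (continuous_apply i)).continuousOn fun Y hY => hPs Y hY i j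

lemma tendsto_sub_div_of_tendsto_slope {f : ℝ → ℝ} {d : ℝ} (hd : 0 < d)
    (hf : Tendsto (slope f 0) (𝓝[>] 0) atTop) :
    Tendsto (fun t => (f (t * d) - f 0) / t) (𝓝[>] 0) atTop := by
  refine ((hf.comp (tendsto_mul_const_nhdsGT_zero hd)).atTop_mul_const hd).congr' ?_
  filter_upwards [self_mem_nhdsWithin] with t ht
  simp only [Function.comp, slope_def_field, sub_zero]
  field_simp [(mem_Ioi.1 ht).ne', hd.ne']

theorem mem_Ioo_of_isMaxOn_entrySum {u : ℝ} (hh : ConcaveOn ℝ (Icc 0 u) h)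
    (h₀ : Tendsto (slope h 0) (𝓝[>] 0) atTop)
    (hu : Tendsto (slope (fun s => h (u - s)) 0) (𝓝[>] 0) atTop)
    (hP : Convex ℝ P) (hPu : ∀ Y ∈ P, ∀ i j, Y i j ∈ Icc 0 u) {Z W : I → J → ℝ} (hZ : Z ∈ P)
    (hmax : IsMaxOn (entrySum h) P Z) (hW : W ∈ P) {i : I} {j : J} (hWij : W i j ∈ Ioo 0 u) :
    Z i j ∈ Ioo 0 u := by
  by_contra hZij
  have hslope : Tendsto (fun t => (h ((1 - t) * Z i j + t * W i j) - h (Z i j)) / t)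
      (𝓝[>] 0) atTop := by
    rcases (hPu Z hZ i j).1.eq_or_lt with h0 | h0
    · rw [← h0]
      simpa using tendsto_sub_div_of_tendsto_slope hWij.1 h₀
    · rw [(hPu Z hZ i j).2.eq_of_not_lt fun hlt => hZij ⟨h0, hlt⟩]
      convert tendsto_sub_div_of_tendsto_slope (sub_pos.2 hWij.2) hu using 4 with t
      · ring_nf
      · simp
  obtain ⟨t, hbig, ht⟩ := ((hslope.eventually_gt_atTop
    (entrySum h Z - entrySum h W + h (W i j) - h (Z i j))).and (Ioo_mem_nhdsGT one_pos)).exists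
  have hM : (1 - t) • Z + t • W ∈ P := hP hZ hW (by linarith [ht.2]) ht.1.le (by ring)
  have hgap := hh.sub_le_entrySum_sub (hPu Z hZ) (hPu W hW) (sub_nonneg.2 ht.2.le) ht.1.le
    (by ring) i j
  have hle := isMaxOn_iff.1 hmax _ hM
  rw [lt_div_iff₀ ht.1] at hbig
  linarith

end EntrySum

section TransportPolytope

variable {m n : ℕ} (R : Fin m → ℕ) (C : Fin n → ℕ)

lemma convex_transportPolytope (κ : ℕ∞) : Convex ℝ (transportPolytope κ R C) := by
  rintro Y ⟨hY₀, hYκ, hYR, hYC⟩ Z ⟨hZ₀, hZκ, hZR, hZC⟩ a b ha hb hab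
  refine ⟨fun i j => ?_, fun i j hκ => ?_, fun i => ?_, fun j => ?_⟩ <;>
    simp only [Pi.add_apply, Pi.smul_apply, smul_eq_mul]
  · have := hY₀ i j
    have := hZ₀ i j
    positivity
  · nlinarith [hYκ i j hκ, hZκ i j hκ]
  · rw [sum_add_distrib, ← mul_sum, ← mul_sum, hYR, hZR, ← add_mul, hab, one_mul]
  · rw [sum_add_distrib, ← mul_sum, ← mul_sum, hYC, hZC, ← add_mul, hab, one_mul]

lemma isCompact_transportPolytope (κ : ℕ∞) : IsCompact (transportPolytope κ R C) := by
  have hclosed : IsClosed (transportPolytope κ R C) := by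
    simp only [transportPolytope, ofPred_and, ofPred_forall]
    refine (isClosed_iInter fun i => isClosed_iInter fun j => ?_).inter
      ((isClosed_iInter fun i => isClosed_iInter fun j => isClosed_iInter fun _ => ?_).inter
      ((isClosed_iInter fun i => ?_).inter (isClosed_iInter fun j => ?_)))
    · exact isClosed_le continuous_const (by fun_prop)
    · exact isClosed_le (by fun_prop) continuous_const
    · exact isClosed_eq (by fun_prop) continuous_const
    · exact isClosed_eq (by fun_prop) continuous_const
  refine (isCompact_univ_pi fun i => isCompact_univ_pi fun (_ : Fin n) =>
    isCompact_Icc (a := (0 : ℝ)) (b := R i)).of_isClosed_subset hclosed fun Y hY => ?_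
  simp only [mem_univ_pi, Set.mem_Icc]
  exact fun i j => ⟨hY.1 i j, hY.2.2.1 i ▸ single_le_sum (fun j _ => hY.1 i j) (mem_univ j)⟩

lemma apply_mem_Icc_of_mem_transportPolytope {κ : ℕ} {Y : Fin m → Fin n → ℝ}
    (hY : Y ∈ transportPolytope κ R C) (i : Fin m) (j : Fin n) : Y i j ∈ Icc 0 (κ : ℝ) :=
  ⟨hY.1 i j, by simpa using hY.2.1 i j (ENat.natCast_ne_top κ)⟩

end TransportPolytope

theorem entropy_unique_interior_maximizer_general {m n : ℕ} (κ : ℕ) (hκ : 0 < κ)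
    (R : Fin m → ℕ) (C : Fin n → ℕ)
    (hint : ∃ W ∈ transportPolytope (κ : ℕ∞) R C,
      ∀ i j, 0 < W i j ∧ W i j < (κ : ℝ)) :
    ∃ Z ∈ transportPolytope (κ : ℕ∞) R C,
      (∀ i j, 0 < Z i j ∧ Z i j < (κ : ℝ)) ∧
      ∀ W ∈ transportPolytope (κ : ℕ∞) R C, W ≠ Z →
        ∑ i, ∑ j, Hmax (κ : ℕ∞) (W i j) < ∑ i, ∑ j, Hmax (κ : ℕ∞) (Z i j) := by
  obtain ⟨W, hW, hWint⟩ := hint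
  have hbox := fun Y (hY : Y ∈ transportPolytope κ R C) =>
    apply_mem_Icc_of_mem_transportPolytope R C hY
  have hconvex := convex_transportPolytope R C κ
  have hconcave := strictConcaveOn_Hmax hκ
  obtain ⟨Z, hZ, hmax⟩ := (isCompact_transportPolytope R C κ).exists_isMaxOn ⟨W, hW⟩
    ((continuousOn_Hmax hκ).entrySum hbox)
  refine ⟨Z, hZ, fun i j => ?_,
    fun Y hY hne => (hconcave.entrySum hconvex hbox).lt_of_isMaxOn hZ hmax hY hne⟩
  exact mem_Ioo_of_isMaxOn_entrySum hconcave.concaveOn (tendsto_slope_Hmax_zero hκ)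
    (tendsto_slope_Hmax_natCast_sub hκ) hconvex hbox hZ hmax hW (hWint i j)

/-- **Lemma.** If `Π_κ(R,C)` contains a matrix with all entries strictly between `0` and
`κ`, then `Z ↦ ∑_{ij} H^max_κ(z_{ij})` attains its maximum over `Π_κ(R,C)` at a unique
matrix, whose entries all lie strictly between `0` and `κ`. -/
theorem entropy_unique_interior_maximizer {m n : ℕ} (κ : ℕ) (hκ : 0 < κ)
    (R : Fin m → ℕ) (C : Fin n → ℕ) (hN : ∑ i, R i = ∑ j, C j)
    (hint : ∃ W ∈ transportPolytope (κ : ℕ∞) R C,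
      ∀ i j, 0 < W i j ∧ W i j < (κ : ℝ)) :
    ∃ Z ∈ transportPolytope (κ : ℕ∞) R C,
      (∀ i j, 0 < Z i j ∧ Z i j < (κ : ℝ)) ∧
      ∀ W ∈ transportPolytope (κ : ℕ∞) R C, W ≠ Z →
        ∑ i, ∑ j, Hmax (κ : ℕ∞) (W i j) < ∑ i, ∑ j, Hmax (κ : ℕ∞) (Z i j) :=
  entropy_unique_interior_maximizer_general κ hκ R C hint
end
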